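/- arXiv:2104.04802 — 3 statements merged into one kernel-verified Lean document; each statement's English description precedes it below -/
import Mathlib

section
/- A strictly stationary (in particular, i.i.d.) sequence (Aₙ) of non-negative p×p matrices is sequentially primitive if and only if all entries of AₙAₙ₋₁⋯A₁ are strictly positive for some almost surely finite stopping time; if (Aₙ) is sequentially primitive, then the matrix of expectations 𝔼A₁ is irreducible. -/
open Matrix MeasureTheory

instance matrixMeasurableSpace (m n : Type*) : MeasurableSpace (Matrix m n ℝ) :=
  (inferInstance : MeasurableSpace (m → n → ℝ))

/-- The backwards product `Mₙ = Aₙ Aₙ₋₁ ⋯ A₁` (indices starting at 1). -/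
def prodRev (p : ℕ) (A : ℕ → Matrix (Fin p) (Fin p) ℝ) : ℕ → Matrix (Fin p) (Fin p) ℝ
  | 0 => 1
  | n + 1 => A (n + 1) * prodRev p A n

/-- The natural filtration of the matrix process: `ℱₙ = σ(A₁,…,Aₙ)`. -/
def historyFiltration (p : ℕ) {Ω : Type*} [MeasurableSpace Ω]
    (A : ℕ → Ω → Matrix (Fin p) (Fin p) ℝ) (n : ℕ) : MeasurableSpace Ω :=
  MeasurableSpace.comap (fun ω => (fun i : Fin n => A (i.val + 1) ω)) inferInstance

/-- `τ : Ω → ℕ∞` is a stopping time for the process `(Aₙ)`: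
`{τ = n}` is measurable with respect to `σ(A₁,…,Aₙ)` for every `n`. -/
def IsStoppingTimeFor (p : ℕ) {Ω : Type*} [MeasurableSpace Ω]
    (A : ℕ → Ω → Matrix (Fin p) (Fin p) ℝ) (τ : Ω → ℕ∞) : Prop :=
  ∀ n : ℕ, MeasurableSet[historyFiltration p A n] {ω | τ ω = (n : ℕ∞)}

/-- Sequential primitivity: there is an a.s. finite stopping time `τ ≥ 1` such that
`A_τ A_{τ−1} ⋯ A₁` has all entries strictly positive almost surely. -/
def SeqPrimitive (p : ℕ) {Ω : Type*} [MeasurableSpace Ω] (μ : Measure Ω)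
    (A : ℕ → Ω → Matrix (Fin p) (Fin p) ℝ) : Prop :=
  ∃ τ : Ω → ℕ∞, IsStoppingTimeFor p A τ ∧ (∀ᵐ ω ∂μ, 1 ≤ τ ω ∧ τ ω ≠ ⊤) ∧
    ∀ᵐ ω ∂μ, ∀ i j, 0 < prodRev p (fun m => A m ω) (τ ω).toNat i j

/-- A non-negative matrix `B` is irreducible: for all `i,j` some power has positive
`(i,j)` entry. -/
def MatIrreducible (p : ℕ) (B : Matrix (Fin p) (Fin p) ℝ) : Prop :=
  ∀ i j, ∃ m, 1 ≤ m ∧ 0 < (B ^ m) i j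

/- ### Auxiliary lemmas -/

lemma mul_entry_pos' {p : ℕ} {B C : Matrix (Fin p) (Fin p) ℝ}
    (hB : ∀ a b, 0 ≤ B a b) (hC : ∀ a b, 0 ≤ C a b) {i j : Fin p}
    (h : 0 < (B * C) i j) : ∃ k, 0 < B i k ∧ 0 < C k j := by
  by_contra hc
  push_neg at hc
  have hle : (B * C) i j ≤ 0 := by
    rw [Matrix.mul_apply]
    apply Finset.sum_nonpos
    intro k _
    rcases lt_or_ge 0 (B i k) with hb | hb
    · have h0 : C k j = 0 := le_antisymm (hc k hb) (hC k j)
      simp [h0]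
    · have h0 : B i k = 0 := le_antisymm hb (hB i k)
      simp [h0]
  linarith

lemma prodRev_nonneg' {p : ℕ} {M : ℕ → Matrix (Fin p) (Fin p) ℝ}
    (hM : ∀ m a b, 0 ≤ M m a b) : ∀ n a b, 0 ≤ prodRev p M n a b := by
  intro n
  induction n with
  | zero =>
    intro a b
    simp only [prodRev]
    by_cases h : a = b <;> simp [Matrix.one_apply, h]
  | succ n ih =>
    intro a b
    simp only [prodRev, Matrix.mul_apply]
    exact Finset.sum_nonneg fun k _ => mul_nonneg (hM _ _ _) (ih _ _)

lemma prodRev_path' {p : ℕ} {M : ℕ → Matrix (Fin p) (Fin p) ℝ}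
    (hM : ∀ m a b, 0 ≤ M m a b) :
    ∀ (n : ℕ) (i j : Fin p), 0 < prodRev p M n i j →
      ∃ π : ℕ → Fin p, π 0 = j ∧ π n = i ∧ ∀ k < n, 0 < M (k+1) (π (k+1)) (π k) := by
  intro n
  induction n with
  | zero =>
    intro i j h
    simp only [prodRev] at h
    have hij : i = j := by
      by_contra hne
      simp [Matrix.one_apply, hne] at h
    exact ⟨fun _ => j, rfl, hij.symm, fun k hk => absurd hk (Nat.not_lt_zero k)⟩
  | succ n ih =>
    intro i j h
    simp only [prodRev] at h
    obtain ⟨k, hk1, hk2⟩ := mul_entry_pos' (fun a b => hM _ a b) (prodRev_nonneg' hM n) h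
    obtain ⟨π, hπ0, hπn, hπe⟩ := ih k j hk2
    refine ⟨fun m => if m = n + 1 then i else π m, by simp [hπ0], by simp, ?_⟩
    intro m hm
    rcases Nat.lt_succ_iff_lt_or_eq.mp hm with hlt | heq
    · have h1 : m + 1 ≠ n + 1 := by omega
      have h2 : m ≠ n + 1 := by omega
      simpa [h1, h2, show m ≠ n by omega] using hπe m hlt
    · have h2 : n ≠ n + 1 := by omega
      rw [heq]
      simpa [h2, hπn] using hk1

lemma matpow_nonneg' {p : ℕ} {B : Matrix (Fin p) (Fin p) ℝ}
    (hB : ∀ a b, 0 ≤ B a b) : ∀ n a b, 0 ≤ (B ^ n) a b := by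
  intro n
  induction n with
  | zero =>
    intro a b
    by_cases h : a = b <;> simp [Matrix.one_apply, h]
  | succ n ih =>
    intro a b
    rw [pow_succ, Matrix.mul_apply]
    exact Finset.sum_nonneg fun k _ => mul_nonneg (ih _ _) (hB _ _)

lemma pow_path_pos' {p : ℕ} {B : Matrix (Fin p) (Fin p) ℝ} (hB : ∀ a b, 0 ≤ B a b) :
    ∀ (n : ℕ) (π : ℕ → Fin p), (∀ k < n, 0 < B (π (k+1)) (π k)) →
      0 < (B ^ n) (π n) (π 0) := by
  intro n
  induction n with
  | zero => intro π _; simp [Matrix.one_apply]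
  | succ n ih =>
    intro π hπ
    rw [pow_succ', Matrix.mul_apply]
    apply Finset.sum_pos' (fun k _ => mul_nonneg (hB _ _) (matpow_nonneg' hB n _ _))
    exact ⟨π n, Finset.mem_univ _,
      mul_pos (hπ n (Nat.lt_succ_self n)) (ih π fun k hk => hπ k (hk.trans (Nat.lt_succ_self n)))⟩

lemma integral_entry_eq' {p : ℕ} {Ω : Type*} [MeasurableSpace Ω] (μ : Measure Ω)
    (A : ℕ → Ω → Matrix (Fin p) (Fin p) ℝ) (hmeas : ∀ n, Measurable (A n))
    (hstat : ∀ k : ℕ, Measure.map (fun ω => (fun n : ℕ => A (n + k) ω)) μ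
      = Measure.map (fun ω => (fun n : ℕ => A n ω)) μ)
    (m : ℕ) (hm : 1 ≤ m) (a b : Fin p) :
    ∫ ω, A m ω a b ∂μ = ∫ ω, A 1 ω a b ∂μ := by
  set f : (ℕ → Matrix (Fin p) (Fin p) ℝ) → ℝ := fun s => s 1 a b with hf
  have hfm : Measurable f := by
    apply Measurable.eval
    apply Measurable.eval
    exact measurable_pi_apply 1
  have hg : ∀ k : ℕ, Measurable (fun ω => (fun n : ℕ => A (n + k) ω)) :=
    fun k => measurable_pi_lambda _ fun n => hmeas (n + k)
  have h1 : ∫ ω, A m ω a b ∂μ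
      = ∫ s, f s ∂(Measure.map (fun ω => (fun n : ℕ => A (n + (m-1)) ω)) μ) := by
    rw [integral_map (hg (m-1)).aemeasurable hfm.aestronglyMeasurable]
    have : 1 + (m - 1) = m := by omega
    simp [hf, this]
  rw [h1, hstat (m-1),
    integral_map (measurable_pi_lambda _ fun n => hmeas n :
      Measurable (fun ω => (fun n : ℕ => A n ω))).aemeasurable
      hfm.aestronglyMeasurable]

lemma integral_pos_of_pos_meas' {Ω : Type*} [MeasurableSpace Ω] (μ : Measure Ω) (f : Ω → ℝ)
    (hf : Integrable f μ) (hnn : ∀ᵐ ω ∂μ, 0 ≤ f ω) (h : 0 < μ {ω | 0 < f ω}) :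
    0 < ∫ ω, f ω ∂μ := by
  rw [integral_pos_iff_support_of_nonneg_ae hnn hf]
  exact h.trans_le (measure_mono fun ω hω => ne_of_gt hω)

/-- A strictly stationary sequence of non-negative matrices is sequentially primitive
iff all entries of `Aₙ⋯A₁` are strictly positive at some a.s. finite stopping time;
and sequential primitivity implies that `𝔼A₁` is irreducible. -/
theorem stmt5 (p : ℕ) (hp : 0 < p) {Ω : Type*} [MeasurableSpace Ω]
    (μ : Measure Ω) [IsProbabilityMeasure μ]
    (A : ℕ → Ω → Matrix (Fin p) (Fin p) ℝ)
    (hmeas : ∀ n, Measurable (A n))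
    (hnn : ∀ n, ∀ᵐ ω ∂μ, ∀ i j, 0 ≤ A n ω i j)
    (hint : ∀ n i j, Integrable (fun ω => A n ω i j) μ)
    (hstat : ∀ k : ℕ, Measure.map (fun ω => (fun n : ℕ => A (n + k) ω)) μ
      = Measure.map (fun ω => (fun n : ℕ => A n ω)) μ) :
    (SeqPrimitive p μ A ↔
      ∃ τ : Ω → ℕ∞, IsStoppingTimeFor p A τ ∧ (∀ᵐ ω ∂μ, 1 ≤ τ ω ∧ τ ω ≠ ⊤) ∧
        ∀ᵐ ω ∂μ, ∀ i j, 0 < prodRev p (fun m => A m ω) (τ ω).toNat i j) ∧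
    (SeqPrimitive p μ A →
      MatIrreducible p (Matrix.of fun i j => ∫ ω, A 1 ω i j ∂μ)) := by
  refine ⟨Iff.rfl, ?_⟩
  rintro ⟨τ, hτstop, hτfin, hτpos⟩ i j
  set B : Matrix (Fin p) (Fin p) ℝ := Matrix.of fun i j => ∫ ω, A 1 ω i j ∂μ with hBdef
  have hBnn : ∀ a b, 0 ≤ B a b := fun a b =>
    integral_nonneg_of_ae ((hnn 1).mono fun ω h => h a b)
  have hNae : ∀ᵐ ω ∂μ, ∀ m a b, 0 ≤ A m ω a b := ae_all_iff.mpr hnn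
  set G : ℕ → Set Ω := fun n => {ω | τ ω = (n : ℕ∞)
    ∧ (∀ i' j', 0 < prodRev p (fun m => A m ω) n i' j')
    ∧ ∀ m a b, 0 ≤ A m ω a b} with hGdef
  -- almost every ω lies in some G (n+1)
  have hcover : ∀ᵐ ω ∂μ, ω ∈ ⋃ n, G (n + 1) := by
    filter_upwards [hτfin, hτpos, hNae] with ω h1 h2 h3
    obtain ⟨h1a, h1b⟩ := h1
    have htτ : τ ω = ((τ ω).toNat : ℕ∞) := (ENat.coe_toNat h1b).symm
    have ht1 : 1 ≤ (τ ω).toNat := by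
      rw [htτ] at h1a
      exact_mod_cast h1a
    refine Set.mem_iUnion.mpr ⟨(τ ω).toNat - 1, ?_⟩
    have hEq : (τ ω).toNat - 1 + 1 = (τ ω).toNat := by omega
    rw [hEq]
    exact ⟨htτ, fun i' j' => h2 i' j', h3⟩
  -- the union has positive measure, so some G (n+1) does
  have hUpos : 0 < μ (⋃ n, G (n + 1)) := by
    have hc0 : μ (⋃ n, G (n + 1))ᶜ = 0 := by
      rw [ae_iff] at hcover
      simpa [Set.compl_def] using hcover
    by_contra hc
    push_neg at hc
    have h0 : μ (⋃ n, G (n + 1)) = 0 := le_antisymm hc zero_le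
    have huniv : μ Set.univ ≤ μ (⋃ n, G (n + 1)) + μ (⋃ n, G (n + 1))ᶜ := by
      rw [← Set.union_compl_self (⋃ n, G (n + 1))]
      exact measure_union_le _ _
    rw [h0, hc0, measure_univ] at huniv
    simp at huniv
  have hex : ∃ n, 0 < μ (G (n + 1)) := by
    by_contra hc
    push_neg at hc
    have h0 : ∀ n, μ (G (n + 1)) = 0 := fun n => le_antisymm (hc n) zero_le
    have h0' : μ (⋃ n, G (n + 1)) = 0 :=
      le_antisymm ((measure_iUnion_le _).trans (by simp [h0])) zero_le
    exact hUpos.ne' h0'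
  obtain ⟨n, hGpos⟩ := hex
  set N := n + 1 with hNdef
  have hN1 : 1 ≤ N := Nat.le_add_left 1 n
  -- cover G N by finitely many "path events"
  set F : (Fin (N + 1) → Fin p) → Set Ω := fun v => {ω | v 0 = j ∧ v (Fin.last N) = i
    ∧ ∀ k : ℕ, ∀ h : k < N,
      0 < A (k + 1) ω (v ⟨k + 1, Nat.succ_lt_succ h⟩) (v ⟨k, Nat.lt_succ_of_lt h⟩)} with hFdef
  have hGF : G N ⊆ ⋃ v, F v := by
    intro ω hω
    obtain ⟨hτω, hposω, hnnω⟩ := hω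
    obtain ⟨π, hπ0, hπN, hπe⟩ := prodRev_path' (fun m a b => hnnω m a b) N i j (hposω i j)
    refine Set.mem_iUnion.mpr ⟨fun k => π k.val, ?_, ?_, ?_⟩
    · simpa using hπ0
    · simpa using hπN
    · intro k hk
      exact hπe k hk
  have hexv : ∃ v, 0 < μ (F v) := by
    by_contra hc
    push_neg at hc
    have h0 : ∀ v, μ (F v) = 0 := fun v => le_antisymm (hc v) zero_le
    have h0' : μ (G N) = 0 :=
      le_antisymm ((measure_mono hGF).trans ((measure_iUnion_le _).trans (by simp [h0]))) zero_le
    exact hGpos.ne' h0'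
  obtain ⟨v, hvpos⟩ := hexv
  -- F v is nonempty so the endpoint conditions hold
  obtain ⟨ω₀, hv0, hvN, -⟩ := nonempty_of_measure_ne_zero (ne_of_gt hvpos)
  -- each edge of the path has positive expected entry
  have hBedge : ∀ k : ℕ, ∀ h : k < N,
      0 < B (v ⟨k + 1, Nat.succ_lt_succ h⟩) (v ⟨k, Nat.lt_succ_of_lt h⟩) := by
    intro k hk
    have hsub : F v ⊆ {ω | 0 < A (k + 1) ω (v ⟨k + 1, Nat.succ_lt_succ hk⟩)
        (v ⟨k, Nat.lt_succ_of_lt hk⟩)} := fun ω hω => hω.2.2 k hk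
    have hmpos : 0 < μ {ω | 0 < A (k + 1) ω (v ⟨k + 1, Nat.succ_lt_succ hk⟩)
        (v ⟨k, Nat.lt_succ_of_lt hk⟩)} := hvpos.trans_le (measure_mono hsub)
    have hI : 0 < ∫ ω, A (k + 1) ω (v ⟨k + 1, Nat.succ_lt_succ hk⟩)
        (v ⟨k, Nat.lt_succ_of_lt hk⟩) ∂μ :=
      integral_pos_of_pos_meas' μ _ (hint (k + 1) _ _)
        ((hnn (k + 1)).mono fun ω h => h _ _) hmpos
    have hEq := integral_entry_eq' μ A hmeas hstat (k + 1) (Nat.le_add_left 1 k)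
      (v ⟨k + 1, Nat.succ_lt_succ hk⟩) (v ⟨k, Nat.lt_succ_of_lt hk⟩)
    rw [hEq] at hI
    exact hI
  -- assemble the path as a map ℕ → Fin p and conclude
  set ρ : ℕ → Fin p := fun m => if h : m ≤ N then v ⟨m, Nat.lt_succ_of_le h⟩ else i with hρdef
  have hedges : ∀ k < N, 0 < B (ρ (k + 1)) (ρ k) := by
    intro k hk
    have h1 : k + 1 ≤ N := hk
    have h2 : k ≤ N := Nat.le_of_lt hk
    simp only [hρdef, dif_pos h1, dif_pos h2]
    exact hBedge k hk
  have hfin := pow_path_pos' hBnn N ρ hedges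
  have hρN : ρ N = i := by
    simp only [hρdef, dif_pos (le_refl N)]
    exact hvN
  have hρ0 : ρ 0 = j := by
    simp only [hρdef, dif_pos (Nat.zero_le N)]
    exact hv0
  rw [hρN, hρ0] at hfin
  exact ⟨N, hN1, hfin⟩
end

section
/- Let (Aₙ) be i.i.d. p×p column-stochastic random matrices with Bₙ = Aₙ(I−J), Nₙ = Aₙ⋯A₁(I−J), and η_{2k} = log ρ(𝔼(B₁^{⊗2k})) where ρ is the spectral radius. Then limsup_{n→∞} (1/n) log 𝔼‖Nₙ^{⊗k}‖²_F ≤ η_{2k}. -/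
open Matrix MeasureTheory ProbabilityTheory Filter

/-- `J = 𝟙𝟙ᵀ/p`: the p×p matrix with all entries `1/p`. -/
noncomputable def Jmat (p : ℕ) : Matrix (Fin p) (Fin p) ℝ :=
  Matrix.of fun _ _ => 1 / (p : ℝ)

/-- The `k`-fold Kronecker (tensor) power of a `p×p` matrix, as a matrix indexed by
`Fin k → Fin p`. -/
def tpow (p k : ℕ) (A : Matrix (Fin p) (Fin p) ℝ) :
    Matrix (Fin k → Fin p) (Fin k → Fin p) ℝ :=
  Matrix.of fun f g => ∏ i, A (f i) (g i)

/-- The Frobenius norm of a real matrix. -/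
noncomputable def frobNorm {m n : Type*} [Fintype m] [Fintype n]
    (S : Matrix m n ℝ) : ℝ :=
  Real.sqrt (∑ i, ∑ j, (S i j) ^ 2)

/-- The spectral radius of a real square matrix (over the complex spectrum). -/
noncomputable def specRad {m : Type*} [Fintype m] [DecidableEq m]
    (B : Matrix m m ℝ) : ℝ :=
  (spectralRadius ℂ (B.map (algebraMap ℝ ℂ))).toReal

/-- Extended-real logarithm, with `log x = −∞` for `x ≤ 0`. -/
noncomputable def elog (x : ℝ) : EReal :=
  if x ≤ 0 then ⊥ else ((Real.log x : ℝ) : EReal)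

/-! ### Auxiliary lemmas -/

attribute [local instance] Matrix.frobeniusSeminormedAddCommGroup
  Matrix.frobeniusNormedAddCommGroup Matrix.frobeniusNormedSpace
  Matrix.frobeniusNormedRing Matrix.frobeniusNormedAlgebra

lemma tpow_mul (p k : ℕ) (X Y : Matrix (Fin p) (Fin p) ℝ) :
    tpow p k (X * Y) = tpow p k X * tpow p k Y := by
  ext f g
  simp only [tpow, Matrix.mul_apply, Matrix.of_apply]
  rw [Finset.prod_univ_sum]
  rw [Fintype.piFinset_univ]
  exact Finset.sum_congr rfl fun h _ => by rw [Finset.prod_mul_distrib]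

lemma Jmat_mul_of_col (p : ℕ) (X : Matrix (Fin p) (Fin p) ℝ)
    (h : ∀ j, ∑ i, X i j = 1) : Jmat p * X = Jmat p := by
  ext i j
  simp only [Jmat, Matrix.mul_apply, Matrix.of_apply]
  rw [← Finset.mul_sum, h j, mul_one]

lemma Jmat_mul_Jmat (p : ℕ) (hp : 0 < p) : Jmat p * Jmat p = Jmat p := by
  ext i j
  simp only [Jmat, Matrix.mul_apply, Matrix.of_apply]
  rw [Finset.sum_const, Finset.card_univ, Fintype.card_fin, nsmul_eq_mul]
  field_simp

lemma prodRev_nonneg (p : ℕ) (A : ℕ → Matrix (Fin p) (Fin p) ℝ)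
    (h : ∀ n, 1 ≤ n → ∀ i j, 0 ≤ A n i j) :
    ∀ n, ∀ i j, 0 ≤ prodRev p A n i j := by
  intro n
  induction n with
  | zero => intro i j; by_cases hij : i = j <;>
      simp [prodRev, Matrix.one_apply, hij]
  | succ n ih =>
      intro i j
      simp only [prodRev, Matrix.mul_apply]
      exact Finset.sum_nonneg fun h' _ =>
        mul_nonneg (h (n+1) (Nat.le_add_left 1 n) i h') (ih h' j)

lemma prodRev_col (p : ℕ) (A : ℕ → Matrix (Fin p) (Fin p) ℝ)
    (h : ∀ n, 1 ≤ n → ∀ j, ∑ i, A n i j = 1) :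
    ∀ n, ∀ j, ∑ i, prodRev p A n i j = 1 := by
  intro n
  induction n with
  | zero => intro j; simp [prodRev, Matrix.one_apply]
  | succ n ih =>
      intro j
      simp only [prodRev, Matrix.mul_apply]
      rw [Finset.sum_comm]
      calc ∑ h', ∑ i, A (n+1) i h' * prodRev p A n h' j
          = ∑ h', prodRev p A n h' j := by
            refine Finset.sum_congr rfl fun h' _ => ?_
            rw [← Finset.sum_mul, h (n+1) (Nat.le_add_left 1 n), one_mul]
        _ = 1 := ih j

lemma Jmat_mul_prodRev (p : ℕ) (A : ℕ → Matrix (Fin p) (Fin p) ℝ)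
    (h : ∀ n, 1 ≤ n → ∀ j, ∑ i, A n i j = 1) (n : ℕ) :
    Jmat p * prodRev p A n = Jmat p :=
  Jmat_mul_of_col p _ (prodRev_col p A h n)

lemma Nrec (p : ℕ) (hp : 0 < p) (A : ℕ → Matrix (Fin p) (Fin p) ℝ)
    (h : ∀ n, 1 ≤ n → ∀ j, ∑ i, A n i j = 1) (n : ℕ) :
    (A (n+1) * (1 - Jmat p)) * (prodRev p A n * (1 - Jmat p))
      = prodRev p A (n+1) * (1 - Jmat p) := by
  have h0 : Jmat p * (prodRev p A n * (1 - Jmat p)) = 0 := by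
    rw [← mul_assoc, Jmat_mul_prodRev p A h n, mul_sub, mul_one, Jmat_mul_Jmat p hp, sub_self]
  have h1 : (1 - Jmat p) * (prodRev p A n * (1 - Jmat p)) = prodRev p A n * (1 - Jmat p) := by
    rw [sub_mul, one_mul, h0, sub_zero]
  calc (A (n+1) * (1 - Jmat p)) * (prodRev p A n * (1 - Jmat p))
      = A (n+1) * ((1 - Jmat p) * (prodRev p A n * (1 - Jmat p))) := by rw [mul_assoc]
    _ = A (n+1) * (prodRev p A n * (1 - Jmat p)) := by rw [h1]
    _ = prodRev p A (n+1) * (1 - Jmat p) := by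
        show _ = (A (n+1) * prodRev p A n) * (1 - Jmat p)
        rw [mul_assoc]

lemma entry_bound (p : ℕ) (hp : 0 < p) (P : Matrix (Fin p) (Fin p) ℝ)
    (hnn : ∀ i j, 0 ≤ P i j) (hcol : ∀ j, ∑ i, P i j = 1) (i j : Fin p) :
    |(P * (1 - Jmat p)) i j| ≤ 1 := by
  have hle : ∀ i j, P i j ≤ 1 := by
    intro i j
    calc P i j ≤ ∑ i', P i' j :=
          Finset.single_le_sum (fun i' _ => hnn i' j) (Finset.mem_univ i)
      _ = 1 := hcol j
  have key : (P * (1 - Jmat p)) i j = P i j - (1 / p) * ∑ h, P i h := by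
    simp only [Matrix.mul_sub, Matrix.mul_one, Matrix.sub_apply, Matrix.mul_apply, Jmat,
      Matrix.of_apply]
    simp_rw [mul_sub]
    rw [Finset.sum_sub_distrib, Finset.mul_sum]
    congr 1
    · rw [Finset.sum_eq_single j]
      · simp [Matrix.one_apply]
      · intro b _ hb; simp [Matrix.one_apply, hb]
      · intro hj; exact absurd (Finset.mem_univ j) hj
    · exact Finset.sum_congr rfl fun x _ => by rw [one_div]; ring
  rw [key]
  have h1 : (0:ℝ) ≤ (1 / p) * ∑ h, P i h :=
    mul_nonneg (by positivity) (Finset.sum_nonneg fun h' _ => hnn i h')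
  have h2 : (1 / (p:ℝ)) * ∑ h, P i h ≤ 1 := by
    have hs : ∑ h, P i h ≤ (p : ℝ) := by
      calc ∑ h, P i h ≤ ∑ _h : Fin p, (1:ℝ) :=
            Finset.sum_le_sum fun h' _ => hle i h'
        _ = p := by simp
    calc (1 / (p:ℝ)) * ∑ h, P i h ≤ (1 / p) * p := by
          apply mul_le_mul_of_nonneg_left hs (by positivity)
      _ = 1 := by field_simp
  have h3 : 0 ≤ P i j := hnn i j
  have h4 : P i j ≤ 1 := hle i j
  rw [abs_le]; constructor <;> linarith

lemma tpow_entry_bound (p k : ℕ) (M : Matrix (Fin p) (Fin p) ℝ)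
    (h : ∀ i j, |M i j| ≤ 1) (f g : Fin k → Fin p) :
    |tpow p k M f g| ≤ 1 := by
  simp only [tpow, Matrix.of_apply]
  rw [Finset.abs_prod]
  exact Finset.prod_le_one (fun i _ => abs_nonneg _) (fun i _ => h _ _)

noncomputable def dup {p k : ℕ} (f : Fin k → Fin p) : Fin (2*k) → Fin p :=
  fun t => Sum.elim f f (finSumFinEquiv.symm (finCongr (two_mul k) t))

lemma tpow_dup (p k : ℕ) (M : Matrix (Fin p) (Fin p) ℝ) (f g : Fin k → Fin p) :
    tpow p (2*k) M (dup f) (dup g) = (tpow p k M f g) ^ 2 := by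
  simp only [tpow, Matrix.of_apply, dup]
  rw [show (∏ x : Fin (2*k), M ((f ⊕ᵥ f) (finSumFinEquiv.symm ((finCongr (two_mul k)) x)))
      ((g ⊕ᵥ g) (finSumFinEquiv.symm ((finCongr (two_mul k)) x))))
    = ∏ s : Fin k ⊕ Fin k, M ((f ⊕ᵥ f) s) ((g ⊕ᵥ g) s) from
      Equiv.prod_comp ((finCongr (two_mul k)).trans finSumFinEquiv.symm)
        (fun s => M ((f ⊕ᵥ f) s) ((g ⊕ᵥ g) s))]
  rw [Fintype.prod_sum_type]
  simp [sq]

lemma frob_sq (p k : ℕ) (N : Matrix (Fin p) (Fin p) ℝ) :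
    frobNorm (tpow p k N) ^ 2 = ∑ f, ∑ g, tpow p (2*k) N (dup f) (dup g) := by
  unfold frobNorm
  rw [Real.sq_sqrt (by positivity)]
  exact Finset.sum_congr rfl fun f _ => Finset.sum_congr rfl fun g _ =>
    (tpow_dup p k N f g).symm

section meas
variable {α : Type*} [MeasurableSpace α] {p : ℕ}

lemma measurable_entry {F : α → Matrix (Fin p) (Fin p) ℝ} (hF : Measurable F) (i j : Fin p) :
    Measurable fun a => F a i j :=
  (measurable_pi_apply j).comp ((measurable_pi_apply i).comp hF)

lemma measurable_of_entries {F : α → Matrix (Fin p) (Fin p) ℝ}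
    (h : ∀ i j, Measurable fun a => F a i j) : Measurable F :=
  measurable_pi_lambda _ fun i => measurable_pi_lambda _ fun j => h i j

lemma Measurable.matrixMul {F G : α → Matrix (Fin p) (Fin p) ℝ}
    (hF : Measurable F) (hG : Measurable G) : Measurable fun a => F a * G a := by
  apply measurable_of_entries
  intro i j
  simp only [Matrix.mul_apply]
  exact Finset.measurable_sum _ fun h' _ =>
    (measurable_entry hF i h').mul (measurable_entry hG h' j)

lemma measurable_prodRev {𝔄 : α → ℕ → Matrix (Fin p) (Fin p) ℝ}
    (h : ∀ m, Measurable fun a => 𝔄 a m) (n : ℕ) :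
    Measurable fun a => prodRev p (𝔄 a) n := by
  induction n with
  | zero => exact measurable_const
  | succ n ih => exact (h (n+1)).matrixMul ih

lemma measurable_tpow_entry {k : ℕ} {F : α → Matrix (Fin p) (Fin p) ℝ} (hF : Measurable F)
    (f g : Fin k → Fin p) : Measurable fun a => tpow p k (F a) f g := by
  simp only [tpow, Matrix.of_apply]
  exact Finset.measurable_prod _ fun i _ => measurable_entry hF (f i) (g i)

end meas

lemma prodRev_congr {p : ℕ} {A A' : ℕ → Matrix (Fin p) (Fin p) ℝ} (n : ℕ)
    (h : ∀ m, 1 ≤ m → m ≤ n → A m = A' m) :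
    prodRev p A n = prodRev p A' n := by
  induction n with
  | zero => rfl
  | succ n ih =>
      simp only [prodRev]
      rw [h (n+1) (Nat.le_add_left 1 n) le_rfl,
        ih fun m h1 h2 => h m h1 (h2.trans (Nat.le_succ n))]

lemma indep_entries (p : ℕ) {Ω : Type*} [MeasurableSpace Ω] (μ : Measure Ω)
    (A : ℕ → Ω → Matrix (Fin p) (Fin p) ℝ) (hmeas : ∀ n, Measurable (A n))
    (hiid : iIndepFun (fun n : ℕ => A (n + 1)) μ)
    (K : ℕ) (n : ℕ) (f h' g : Fin K → Fin p) :
    IndepFun (fun ω => tpow p K (A (n+1) ω * (1 - Jmat p)) f h')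
      (fun ω => tpow p K (prodRev p (fun m => A m ω) n * (1 - Jmat p)) h' g) μ := by
  classical
  have hd : Disjoint ({n} : Finset ℕ) (Finset.range n) := by
    simp [Finset.disjoint_left]
  have hbase := hiid.indepFun_finset {n} (Finset.range n) hd (fun i => hmeas (i+1))
  set φ : (↥({n} : Finset ℕ) → Matrix (Fin p) (Fin p) ℝ) → ℝ :=
    fun v => tpow p K (v ⟨n, Finset.mem_singleton_self n⟩ * (1 - Jmat p)) f h' with hφ
  set ψ : (↥(Finset.range n) → Matrix (Fin p) (Fin p) ℝ) → ℝ :=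
    fun v => tpow p K (prodRev p
      (fun m => if hm : m - 1 ∈ Finset.range n then v ⟨m-1, hm⟩ else 1) n
        * (1 - Jmat p)) h' g with hψ
  have hφm : Measurable φ :=
    measurable_tpow_entry ((measurable_pi_apply _).matrixMul measurable_const) f h'
  have hψm : Measurable ψ := by
    apply measurable_tpow_entry _ h' g
    apply Measurable.matrixMul _ measurable_const
    apply measurable_prodRev
    intro m
    by_cases hm : m - 1 ∈ Finset.range n
    · simp only [hm, dif_pos]
      exact measurable_pi_apply _
    · simp only [hm, dif_neg, not_false_iff]
      exact measurable_const
  have hcomp := hbase.comp hφm hψm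
  have he1 : (fun ω => tpow p K (A (n+1) ω * (1 - Jmat p)) f h')
      = φ ∘ (fun a (i : ↥({n} : Finset ℕ)) => A ((i : ℕ)+1) a) := rfl
  have he2 : (fun ω => tpow p K (prodRev p (fun m => A m ω) n * (1 - Jmat p)) h' g)
      = ψ ∘ (fun a (i : ↥(Finset.range n)) => A ((i : ℕ)+1) a) := by
    funext ω
    simp only [Function.comp_apply, hψ]
    congr 2
    apply prodRev_congr
    intro m h1 h2
    have hm : m - 1 ∈ Finset.range n := Finset.mem_range.mpr (by omega)
    rw [dif_pos hm]
    have hmm : m - 1 + 1 = m := by omega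
    rw [hmm]
  rw [he1, he2]
  exact hcomp

lemma entry_le_frob {I I' : Type*} [Fintype I] [Fintype I'] {α : Type*}
    [SeminormedAddCommGroup α] (X : Matrix I I' α) (a : I) (b : I') : ‖X a b‖ ≤ ‖X‖ := by
  rw [Matrix.frobenius_norm_def]
  have h1 : ‖X a b‖ ^ (2:ℝ) ≤ ∑ i, ∑ j, ‖X i j‖ ^ (2:ℝ) := by
    have hrow := Finset.single_le_sum (f := fun i => ∑ j, ‖X i j‖ ^ (2:ℝ))
      (fun i _ => Finset.sum_nonneg fun j _ => Real.rpow_nonneg (norm_nonneg _) _)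
      (Finset.mem_univ a)
    refine le_trans ?_ hrow
    exact Finset.single_le_sum (f := fun j => ‖X a j‖ ^ (2:ℝ))
      (fun j _ => Real.rpow_nonneg (norm_nonneg _) _) (Finset.mem_univ b)
  calc ‖X a b‖ = (‖X a b‖ ^ (2:ℝ)) ^ (1/2:ℝ) := by
        rw [← Real.rpow_mul (norm_nonneg _)]; norm_num
    _ ≤ (∑ i, ∑ j, ‖X i j‖ ^ (2:ℝ)) ^ (1/2:ℝ) :=
        Real.rpow_le_rpow (Real.rpow_nonneg (norm_nonneg _) _) h1 (by norm_num)

noncomputable local instance (priority := 100) matCS {I : Type*} [Fintype I] :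
    CompleteSpace (Matrix I I ℂ) := FiniteDimensional.complete ℂ _


/-- With `Bₙ = Aₙ(I−J)`, `Nₙ = Aₙ⋯A₁(I−J)` and `η_{2k} = log ρ(𝔼(B₁^{⊗2k}))`:
`limsup (1/n) log 𝔼‖Nₙ^{⊗k}‖²_F ≤ η_{2k}`. -/
theorem stmt11 (p : ℕ) (hp : 0 < p) {Ω : Type*} [MeasurableSpace Ω]
    (μ : Measure Ω) [IsProbabilityMeasure μ]
    (A : ℕ → Ω → Matrix (Fin p) (Fin p) ℝ)
    (hmeas : ∀ n, Measurable (A n))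
    (hnn : ∀ n, ∀ᵐ ω ∂μ, ∀ i j, 0 ≤ A n ω i j)
    (hcol : ∀ n, ∀ᵐ ω ∂μ, ∀ j, ∑ i, A n ω i j = 1)
    (hiid : iIndepFun (fun n : ℕ => A (n + 1)) μ)
    (hid : ∀ n, 1 ≤ n → IdentDistrib (A n) (A 1) μ μ)
    (k : ℕ) (hk : 0 < k) :
    limsup (fun n : ℕ =>
        ((1 / (n : ℝ) : ℝ) : EReal) *
          elog (∫ ω, frobNorm (tpow p k
            (prodRev p (fun m => A m ω) n *
              ((1 : Matrix (Fin p) (Fin p) ℝ) - Jmat p))) ^ 2 ∂μ)) atTop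
      ≤ elog (specRad (Matrix.of fun f g =>
          ∫ ω, tpow p (2 * k)
            (A 1 ω * ((1 : Matrix (Fin p) (Fin p) ℝ) - Jmat p)) f g ∂μ)) := by
  classical
  set M : Matrix (Fin (2*k) → Fin p) (Fin (2*k) → Fin p) ℝ :=
    Matrix.of fun f g => ∫ ω, tpow p (2 * k)
      (A 1 ω * ((1 : Matrix (Fin p) (Fin p) ℝ) - Jmat p)) f g ∂μ with hMdef
  set C : Matrix (Fin (2*k) → Fin p) (Fin (2*k) → Fin p) ℝ :=
    tpow p (2*k) ((1 : Matrix (Fin p) (Fin p) ℝ) - Jmat p) with hCdef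
  -- good event
  have hgood : ∀ᵐ ω ∂μ, ∀ n, 1 ≤ n →
      ((∀ i j, 0 ≤ A n ω i j) ∧ ∀ j, ∑ i, A n ω i j = 1) := by
    rw [ae_all_iff]
    intro n
    filter_upwards [hnn n, hcol n] with ω h1 h2 _
    exact ⟨h1, h2⟩
  -- measurability
  have measN : ∀ (n : ℕ) (f g : Fin (2*k) → Fin p),
      Measurable fun ω => tpow p (2*k)
        (prodRev p (fun m => A m ω) n * (1 - Jmat p)) f g :=
    fun n f g => measurable_tpow_entry
      ((measurable_prodRev (fun m => hmeas m) n).matrixMul measurable_const) f g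
  have measB : ∀ (n : ℕ) (f g : Fin (2*k) → Fin p),
      Measurable fun ω => tpow p (2*k) (A n ω * (1 - Jmat p)) f g :=
    fun n f g => measurable_tpow_entry ((hmeas n).matrixMul measurable_const) f g
  -- a.e. bounds
  have boundN : ∀ n : ℕ, ∀ᵐ ω ∂μ, ∀ (f g : Fin (2*k) → Fin p),
      |tpow p (2*k) (prodRev p (fun m => A m ω) n * (1 - Jmat p)) f g| ≤ 1 := by
    intro n
    filter_upwards [hgood] with ω hω f g
    exact tpow_entry_bound p (2*k) _
      (fun i j => entry_bound p hp _ (prodRev_nonneg p _ (fun m hm => (hω m hm).1) n)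
        (prodRev_col p _ (fun m hm => (hω m hm).2) n) i j) f g
  have boundB : ∀ n : ℕ, 1 ≤ n → ∀ᵐ ω ∂μ, ∀ (f g : Fin (2*k) → Fin p),
      |tpow p (2*k) (A n ω * (1 - Jmat p)) f g| ≤ 1 := by
    intro n hn
    filter_upwards [hgood] with ω hω f g
    exact tpow_entry_bound p (2*k) _
      (fun i j => entry_bound p hp _ (hω n hn).1 (hω n hn).2 i j) f g
  -- integrability
  have intN : ∀ (n : ℕ) (f g : Fin (2*k) → Fin p),
      Integrable (fun ω => tpow p (2*k)
        (prodRev p (fun m => A m ω) n * (1 - Jmat p)) f g) μ := by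
    intro n f g
    refine ⟨(measN n f g).aestronglyMeasurable, HasFiniteIntegral.of_bounded (C := 1) ?_⟩
    filter_upwards [boundN n] with ω hω
    simpa [Real.norm_eq_abs] using hω f g
  -- key identity : E[tpow(N_n)] = M^n * C
  have key : ∀ n : ℕ,
      (Matrix.of fun f g => ∫ ω, tpow p (2*k)
        (prodRev p (fun m => A m ω) n * (1 - Jmat p)) f g ∂μ) = M ^ n * C := by
    intro n
    induction n with
    | zero =>
        ext f g
        rw [pow_zero, one_mul]
        show (∫ ω, tpow p (2*k) (prodRev p (fun m => A m ω) 0 * (1 - Jmat p)) f g ∂μ) = C f g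
        have h0 : (fun ω : Ω => tpow p (2*k) (prodRev p (fun m => A m ω) 0 * (1 - Jmat p)) f g)
            = fun _ : Ω => C f g := by
          funext ω
          show tpow p (2*k) ((1 : Matrix (Fin p) (Fin p) ℝ) * (1 - Jmat p)) f g = C f g
          rw [one_mul, hCdef]
        rw [h0, integral_const]
        simp
    | succ n ih =>
        ext f g
        show (∫ ω, tpow p (2*k) (prodRev p (fun m => A m ω) (n+1) * (1 - Jmat p)) f g ∂μ)
          = (M^(n+1) * C) f g
        have hae : (fun ω => tpow p (2*k)
              (prodRev p (fun m => A m ω) (n+1) * (1 - Jmat p)) f g)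
            =ᵐ[μ] fun ω => ∑ h' : Fin (2*k) → Fin p,
              tpow p (2*k) (A (n+1) ω * (1 - Jmat p)) f h'
                * tpow p (2*k) (prodRev p (fun m => A m ω) n * (1 - Jmat p)) h' g := by
          filter_upwards [hgood] with ω hω
          rw [← Nrec p hp (fun m => A m ω) (fun m hm => (hω m hm).2) n, tpow_mul,
            Matrix.mul_apply]
        rw [integral_congr_ae hae]
        have hint : ∀ h' : Fin (2*k) → Fin p, Integrable (fun ω =>
            tpow p (2*k) (A (n+1) ω * (1 - Jmat p)) f h'
              * tpow p (2*k) (prodRev p (fun m => A m ω) n * (1 - Jmat p)) h' g) μ := by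
          intro h'
          refine ⟨((measB (n+1) f h').mul (measN n h' g)).aestronglyMeasurable,
            HasFiniteIntegral.of_bounded (C := 1) ?_⟩
          filter_upwards [boundN n, boundB (n+1) (by omega)] with ω h1 h2
          rw [Real.norm_eq_abs, abs_mul]
          calc |tpow p (2*k) (A (n+1) ω * (1 - Jmat p)) f h'|
                * |tpow p (2*k) (prodRev p (fun m => A m ω) n * (1 - Jmat p)) h' g|
              ≤ 1 * 1 := mul_le_mul (h2 f h') (h1 h' g) (abs_nonneg _) zero_le_one
            _ = 1 := mul_one 1
        rw [integral_finset_sum _ (fun h' _ => hint h')]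
        have hterm : ∀ h' : Fin (2*k) → Fin p,
            (∫ ω, tpow p (2*k) (A (n+1) ω * (1 - Jmat p)) f h'
              * tpow p (2*k) (prodRev p (fun m => A m ω) n * (1 - Jmat p)) h' g ∂μ)
            = M f h' * (M^n * C) h' g := by
          intro h'
          have hind := indep_entries p μ A hmeas hiid (2*k) n f h' g
          rw [hind.integral_fun_mul_eq_mul_integral (measB (n+1) f h').aestronglyMeasurable
            (measN n h' g).aestronglyMeasurable]
          congr 1
          · have hcompid := ((hid (n+1) (by omega)).comp
              (measurable_tpow_entry (measurable_id.matrixMul measurable_const) f h' :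
                Measurable fun X : Matrix (Fin p) (Fin p) ℝ =>
                  tpow p (2*k) (X * (1 - Jmat p)) f h')).integral_eq
            rw [hMdef]
            exact hcompid
          · rw [← ih]
            rfl
        rw [Finset.sum_congr rfl (fun h' _ => hterm h')]
        rw [pow_succ', mul_assoc, Matrix.mul_apply]
  -- the expected squared Frobenius norm
  have hu : ∀ n : ℕ, (∫ ω, frobNorm (tpow p k
        (prodRev p (fun m => A m ω) n *
          ((1 : Matrix (Fin p) (Fin p) ℝ) - Jmat p))) ^ 2 ∂μ)
      = ∑ f : Fin k → Fin p, ∑ g : Fin k → Fin p, (M^n * C) (dup f) (dup g) := by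
    intro n
    have hpt : (fun ω => frobNorm (tpow p k
          (prodRev p (fun m => A m ω) n *
            ((1 : Matrix (Fin p) (Fin p) ℝ) - Jmat p))) ^ 2)
        = fun ω => ∑ f : Fin k → Fin p, ∑ g : Fin k → Fin p,
            tpow p (2*k) (prodRev p (fun m => A m ω) n * (1 - Jmat p)) (dup f) (dup g) :=
      funext fun ω => frob_sq p k _
    rw [hpt]
    rw [integral_finset_sum _ (fun f _ =>
      integrable_finset_sum _ (fun g _ => intN n (dup f) (dup g)))]
    refine Finset.sum_congr rfl fun f _ => ?_
    rw [integral_finset_sum _ (fun g _ => intN n (dup f) (dup g))]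
    refine Finset.sum_congr rfl fun g _ => ?_
    rw [← key n]
    rfl
  -- spectral radius is finite
  have hSne : spectralRadius ℂ (M.map (algebraMap ℝ ℂ)) ≠ ⊤ := by
    intro htop
    have hb := spectrum.spectralRadius_le_pow_nnnorm_pow_one_div ℂ (M.map (algebraMap ℝ ℂ)) 0
    rw [htop] at hb
    have hlt : (‖(M.map (algebraMap ℝ ℂ)) ^ (0+1)‖₊ : ENNReal) ^ (1/((0:ℕ)+1) : ℝ)
        * ((‖(1 : Matrix (Fin (2*k) → Fin p) (Fin (2*k) → Fin p) ℂ)‖₊ : ENNReal))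
          ^ (1/((0:ℕ)+1) : ℝ) < ⊤ := by
      apply ENNReal.mul_lt_top <;>
        exact ENNReal.rpow_lt_top_of_nonneg (by norm_num) (by simp)
    exact absurd (lt_of_le_of_lt hb hlt) (lt_irrefl _)
  -- reduce to a real bound
  refine le_of_forall_gt_imp_ge_of_dense fun c hc => ?_
  rcases EReal.exists_between_coe_real hc with ⟨x, hx1, hx2⟩
  refine le_trans ?_ hx2.le
  -- choose t < x with  spectralRadius < ofReal (exp t)
  obtain ⟨t, ht1, ht2⟩ : ∃ t : ℝ, t < x ∧
      spectralRadius ℂ (M.map (algebraMap ℝ ℂ)) < ENNReal.ofReal (Real.exp t) := by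
    by_cases hρ : specRad M ≤ 0
    · refine ⟨x - 1, by linarith, ?_⟩
      have hz : spectralRadius ℂ (M.map (algebraMap ℝ ℂ)) = 0 := by
        have h0 : (spectralRadius ℂ (M.map (algebraMap ℝ ℂ))).toReal = 0 :=
          le_antisymm hρ ENNReal.toReal_nonneg
        exact ((ENNReal.toReal_eq_zero_iff _).mp h0).resolve_right hSne
      rw [hz]
      exact ENNReal.ofReal_pos.mpr (Real.exp_pos _)
    · push_neg at hρ
      have hlog : Real.log (specRad M) < x := by
        have hx1' := hx1
        rw [elog, if_neg (not_le.mpr hρ)] at hx1'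
        exact_mod_cast hx1'
      refine ⟨(Real.log (specRad M) + x)/2, by linarith, ?_⟩
      have hS : spectralRadius ℂ (M.map (algebraMap ℝ ℂ)) = ENNReal.ofReal (specRad M) := by
        rw [specRad, ENNReal.ofReal_toReal hSne]
      rw [hS, ENNReal.ofReal_lt_ofReal_iff (Real.exp_pos _)]
      calc specRad M = Real.exp (Real.log (specRad M)) := (Real.exp_log hρ).symm
        _ < Real.exp _ := Real.exp_lt_exp.mpr (by linarith)
  -- Gelfand's formula
  have hG := spectrum.pow_nnnorm_pow_one_div_tendsto_nhds_spectralRadius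
    (M.map (algebraMap ℝ ℂ))
  have hev1 := hG.eventually_lt_const ht2
  have hmapall : ∀ m : ℕ, (M.map (algebraMap ℝ ℂ)) ^ m = (M ^ m).map (algebraMap ℝ ℂ) := by
    intro m
    induction m with
    | zero => simp [Matrix.map_one (algebraMap ℝ ℂ) (map_zero _) (map_one _)]
    | succ m ih => rw [pow_succ, pow_succ, ih, ← Matrix.map_mul]
  have hMn : ∀ᶠ n : ℕ in atTop, ‖M ^ n‖ ≤ (Real.exp t) ^ n := by
    filter_upwards [hev1, eventually_ge_atTop 1] with n hn hn1
    have hmap := hmapall n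
    have hne : ((n:ℝ)) ≠ 0 := by positivity
    have h1 : (‖(M.map (algebraMap ℝ ℂ)) ^ n‖₊ : ENNReal)
        ≤ ENNReal.ofReal ((Real.exp t) ^ n) := by
      calc (‖(M.map (algebraMap ℝ ℂ)) ^ n‖₊ : ENNReal)
          = ((‖(M.map (algebraMap ℝ ℂ)) ^ n‖₊ : ENNReal) ^ (1/(n:ℝ))) ^ ((n:ℕ):ℝ) := by
            rw [← ENNReal.rpow_mul, one_div, inv_mul_cancel₀ hne, ENNReal.rpow_one]
        _ ≤ (ENNReal.ofReal (Real.exp t)) ^ ((n:ℕ):ℝ) :=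
            ENNReal.rpow_le_rpow hn.le (Nat.cast_nonneg n)
        _ = ENNReal.ofReal ((Real.exp t) ^ ((n:ℕ):ℝ)) :=
            ENNReal.ofReal_rpow_of_pos (Real.exp_pos t)
        _ = ENNReal.ofReal ((Real.exp t) ^ n) := by rw [Real.rpow_natCast]
    have h2 : ‖(M.map (algebraMap ℝ ℂ)) ^ n‖ ≤ (Real.exp t) ^ n := by
      have h3 := ENNReal.toReal_mono ENNReal.ofReal_ne_top h1
      rw [ENNReal.coe_toReal, ENNReal.toReal_ofReal (by positivity)] at h3
      simpa using h3
    calc ‖M ^ n‖ = ‖(M.map (algebraMap ℝ ℂ)) ^ n‖ := by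
          rw [hmap]
          exact (Matrix.frobenius_norm_map_eq _ _ fun a => by simp).symm
      _ ≤ _ := h2
  -- bound on the sum
  set c2 : ℝ := ((Fintype.card (Fin k → Fin p) : ℝ))^2 * ‖C‖ + 1 with hc2def
  have hc2pos : 0 < c2 := by positivity
  have hub : ∀ n : ℕ,
      (∑ f : Fin k → Fin p, ∑ g : Fin k → Fin p, (M^n * C) (dup f) (dup g))
        ≤ c2 * ‖M ^ n‖ := by
    intro n
    have hentry : ∀ (f g : Fin k → Fin p), (M^n * C) (dup f) (dup g) ≤ ‖M^n‖ * ‖C‖ := by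
      intro f g
      calc (M^n * C) (dup f) (dup g) ≤ |(M^n * C) (dup f) (dup g)| := le_abs_self _
        _ ≤ ‖M^n * C‖ := by
            rw [← Real.norm_eq_abs]
            exact entry_le_frob _ _ _
        _ ≤ ‖M^n‖ * ‖C‖ := Matrix.frobenius_norm_mul _ _
    calc (∑ f : Fin k → Fin p, ∑ g : Fin k → Fin p, (M^n * C) (dup f) (dup g))
        ≤ ∑ _f : Fin k → Fin p, ∑ _g : Fin k → Fin p, ‖M^n‖ * ‖C‖ :=
          Finset.sum_le_sum fun f _ => Finset.sum_le_sum fun g _ => hentry f g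
      _ = ((Fintype.card (Fin k → Fin p) : ℝ))^2 * (‖M^n‖ * ‖C‖) := by
          simp [Finset.sum_const, Finset.card_univ]
          ring
      _ ≤ c2 * ‖M^n‖ := by
          rw [hc2def]
          nlinarith [norm_nonneg (M^n), norm_nonneg C]
  -- finish
  have hev3 : ∀ᶠ n : ℕ in atTop, Real.log c2 / n ≤ x - t :=
    (tendsto_const_div_atTop_nhds_zero_nat (Real.log c2)).eventually_le_const (by linarith)
  refine limsup_le_of_le (by isBoundedDefault) ?_
  filter_upwards [hMn, hev3, eventually_ge_atTop 1] with n hn h3 hn1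
  rw [hu n]
  by_cases hun : (∑ f : Fin k → Fin p, ∑ g : Fin k → Fin p, (M^n * C) (dup f) (dup g)) ≤ 0
  · rw [elog, if_pos hun, EReal.mul_bot_of_pos]
    · exact bot_le
    · exact_mod_cast EReal.coe_pos.mpr (by positivity : (0:ℝ) < 1/(n:ℝ))
  · push_neg at hun
    rw [elog, if_neg (not_le.mpr hun), ← EReal.coe_mul]
    apply EReal.coe_le_coe_iff.mpr
    have hub2 : (∑ f : Fin k → Fin p, ∑ g : Fin k → Fin p, (M^n * C) (dup f) (dup g))
        ≤ c2 * (Real.exp t)^n :=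
      le_trans (hub n) (mul_le_mul_of_nonneg_left hn hc2pos.le)
    have hlogu : Real.log (∑ f : Fin k → Fin p, ∑ g : Fin k → Fin p,
        (M^n * C) (dup f) (dup g)) ≤ Real.log c2 + n * t := by
      calc Real.log _ ≤ Real.log (c2 * (Real.exp t)^n) := Real.log_le_log hun hub2
        _ = Real.log c2 + n * t := by
            rw [Real.log_mul (ne_of_gt hc2pos) (by positivity), Real.log_pow, Real.log_exp]
    have hn0 : (0:ℝ) < n := by exact_mod_cast hn1
    rw [show (1/(n:ℝ)) * Real.log (∑ f : Fin k → Fin p, ∑ g : Fin k → Fin p,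
        (M^n * C) (dup f) (dup g)) = Real.log (∑ f : Fin k → Fin p, ∑ g : Fin k → Fin p,
        (M^n * C) (dup f) (dup g)) / n from by ring]
    rw [div_le_iff₀ hn0]
    have h3' : Real.log c2 ≤ (x - t) * n := (div_le_iff₀ hn0).mp h3
    calc Real.log _ ≤ Real.log c2 + n*t := hlogu
      _ ≤ (x - t)*n + n*t := by linarith
      _ = x * n := by ring
end

section
/- For square random matrices X and Y defined on a common probability space (of possibly different sizes), the spectral radius satisfies ρ(𝔼(X⊗Y)) ≤ √ρ(𝔼(X⊗X)) · √ρ(𝔼(Y⊗Y)). -/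
open Matrix MeasureTheory Kronecker
open scoped ENNReal NNReal Topology

section Aux

open Filter

attribute [local instance] Matrix.linftyOpNormedRing Matrix.linftyOpNormedAlgebra

lemma specRad_of_isEmpty {m : Type*} [Fintype m] [DecidableEq m] [IsEmpty m]
    (B : Matrix m m ℝ) : specRad B = 0 := by
  haveI : Subsingleton (Matrix m m ℂ) := ⟨fun a b => by ext i j; exact isEmptyElim i⟩
  have h : spectrum ℂ (B.map (algebraMap ℝ ℂ)) = ∅ := by
    ext k
    simp [spectrum.mem_iff, isUnit_of_subsingleton]
  rw [specRad, spectralRadius, h]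
  simp

lemma powInt {Ω : Type*} [MeasurableSpace Ω] (μ : Measure Ω) [IsProbabilityMeasure μ]
    {m : Type*} [Fintype m] [DecidableEq m]
    (V : Ω → Matrix m m ℝ) (hV : ∀ i j, Integrable (fun ω => V ω i j) μ) (n : ℕ) :
    (∀ a b, Integrable (fun ω : Fin n → Ω => (List.ofFn fun k => V (ω k)).prod a b)
        (Measure.pi fun _ => μ)) ∧
    (∀ a b, ((Matrix.of fun a b => ∫ ω, V ω a b ∂μ) ^ n) a b
        = ∫ ω : Fin n → Ω, (List.ofFn fun k => V (ω k)).prod a b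
            ∂(Measure.pi fun _ => μ)) := by
  induction n with
  | zero =>
      constructor
      · intro a b
        simp only [List.ofFn_zero, List.prod_nil]
        exact integrable_const _
      · intro a b
        simp only [List.ofFn_zero, List.prod_nil, pow_zero]
        rw [integral_const]
        simp
  | succ n ih =>
      set πn : Measure (Fin n → Ω) := Measure.pi fun _ => μ with hπn
      have hmp := measurePreserving_piFinSuccAbove (fun _ : Fin (n + 1) => μ) 0
      set e := MeasurableEquiv.piFinSuccAbove (fun _ : Fin (n + 1) => Ω) 0 with he
      have hg : ∀ a b, ∀ ω : Fin (n+1) → Ω,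
          (List.ofFn fun k => V (ω k)).prod a b
          = (V (ω 0) * (List.ofFn fun k : Fin n => V (ω k.succ)).prod) a b := by
        intro a b ω
        rw [List.ofFn_succ, List.prod_cons]
      have hcomp : ∀ a b, (fun ω : Fin (n+1) → Ω => (List.ofFn fun k => V (ω k)).prod a b)
          = (fun z : Ω × (Fin n → Ω) =>
              (V z.1 * (List.ofFn fun k : Fin n => V (z.2 k)).prod) a b) ∘ e := by
        intro a b
        funext ω
        rw [hg]
        simp [e, MeasurableEquiv.piFinSuccAbove, Fin.removeNth, Fin.tail]
      have hgint : ∀ a b, Integrable (fun z : Ω × (Fin n → Ω) =>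
          (V z.1 * (List.ofFn fun k : Fin n => V (z.2 k)).prod) a b) (μ.prod πn) := by
        intro a b
        simp only [Matrix.mul_apply]
        exact integrable_finset_sum _ fun c _ => (hV a c).mul_prod (ih.1 c b)
      constructor
      · intro a b
        rw [hcomp a b]
        exact (hmp.integrable_comp_emb (MeasurableEquiv.measurableEmbedding e)).2 (hgint a b)
      · intro a b
        rw [pow_succ']
        rw [Matrix.mul_apply]
        calc ∑ c, (Matrix.of fun a b => ∫ ω, V ω a b ∂μ) a c
              * ((Matrix.of fun a b => ∫ ω, V ω a b ∂μ) ^ n) c b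
            = ∑ c, (∫ ω, V ω a c ∂μ) * ∫ ω : Fin n → Ω,
                (List.ofFn fun k => V (ω k)).prod c b ∂πn := by
              simp only [Matrix.of_apply, ih.2]
          _ = ∑ c, ∫ z : Ω × (Fin n → Ω),
                V z.1 a c * (List.ofFn fun k : Fin n => V (z.2 k)).prod c b ∂(μ.prod πn) := by
              refine Finset.sum_congr rfl fun c _ => ?_
              exact (integral_prod_mul (fun ω => V ω a c)
                (fun y : Fin n → Ω => (List.ofFn fun k => V (y k)).prod c b)).symm
          _ = ∫ z : Ω × (Fin n → Ω),
                (V z.1 * (List.ofFn fun k : Fin n => V (z.2 k)).prod) a b ∂(μ.prod πn) := by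
              rw [← integral_finset_sum]
              · simp only [Matrix.mul_apply]
              · exact fun c _ => (hV a c).mul_prod (ih.1 c b)
          _ = ∫ ω : Fin (n+1) → Ω, (List.ofFn fun k => V (ω k)).prod a b
                ∂(Measure.pi fun _ => μ) := by
              rw [hcomp a b]
              exact (hmp.integral_comp (MeasurableEquiv.measurableEmbedding e) _).symm

lemma kron_listProd {q s : ℕ} {n : ℕ} (Xs : Fin n → Matrix (Fin q) (Fin q) ℝ)
    (Ys : Fin n → Matrix (Fin s) (Fin s) ℝ) :
    (List.ofFn fun k => Xs k ⊗ₖ Ys k).prod = (List.ofFn Xs).prod ⊗ₖ (List.ofFn Ys).prod := by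
  induction n with
  | zero => simp [Matrix.one_kronecker_one]
  | succ n ih =>
      rw [List.ofFn_succ, List.prod_cons, List.ofFn_succ (f := Xs), List.prod_cons,
        List.ofFn_succ (f := Ys), List.prod_cons, ih, Matrix.mul_kronecker_mul]

variable {q s : ℕ} {Ω : Type*} [MeasurableSpace Ω] {μ : Measure Ω} [IsProbabilityMeasure μ]
  {X : Ω → Matrix (Fin q) (Fin q) ℝ} {Y : Ω → Matrix (Fin s) (Fin s) ℝ}

omit [IsProbabilityMeasure μ] in
lemma kronInt {q' s' : ℕ} {X' : Ω → Matrix (Fin q') (Fin q') ℝ}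
    {Y' : Ω → Matrix (Fin s') (Fin s') ℝ}
    (h : ∀ i j i' j', Integrable (fun ω => X' ω i j * Y' ω i' j') μ) :
    ∀ a b, Integrable (fun ω => (X' ω ⊗ₖ Y' ω) a b) μ := fun a b => by
  simpa [Matrix.kroneckerMap_apply] using h a.1 b.1 a.2 b.2

lemma entry_ineq
    (hXY : ∀ i j i' j', Integrable (fun ω => X ω i j * Y ω i' j') μ)
    (hXX : ∀ i j i' j', Integrable (fun ω => X ω i j * X ω i' j') μ)
    (hYY : ∀ i j i' j', Integrable (fun ω => Y ω i j * Y ω i' j') μ)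
    (n : ℕ) (i j : Fin q) (i' j' : Fin s) :
    (((Matrix.of fun a b => ∫ ω, (X ω ⊗ₖ Y ω) a b ∂μ) ^ n) (i,i') (j,j'))^2
      ≤ ((Matrix.of fun a b => ∫ ω, (X ω ⊗ₖ X ω) a b ∂μ) ^ n) (i,i) (j,j)
        * ((Matrix.of fun a b => ∫ ω, (Y ω ⊗ₖ Y ω) a b ∂μ) ^ n) (i',i') (j',j')
    ∧ 0 ≤ ((Matrix.of fun a b => ∫ ω, (X ω ⊗ₖ X ω) a b ∂μ) ^ n) (i,i) (j,j)
    ∧ 0 ≤ ((Matrix.of fun a b => ∫ ω, (Y ω ⊗ₖ Y ω) a b ∂μ) ^ n) (i',i') (j',j') := by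
  obtain ⟨hIxy, hExy⟩ := powInt μ (fun ω => X ω ⊗ₖ Y ω) (kronInt hXY) n
  obtain ⟨hIxx, hExx⟩ := powInt μ (fun ω => X ω ⊗ₖ X ω) (kronInt hXX) n
  obtain ⟨hIyy, hEyy⟩ := powInt μ (fun ω => Y ω ⊗ₖ Y ω) (kronInt hYY) n
  rw [hExy, hExx, hEyy]
  set πn : Measure (Fin n → Ω) := Measure.pi fun _ => μ with hπn
  set F : (Fin n → Ω) → ℝ := fun ω => (List.ofFn fun k => X (ω k)).prod i j with hF
  set G : (Fin n → Ω) → ℝ := fun ω => (List.ofFn fun k => Y (ω k)).prod i' j' with hG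
  have hv : ∀ ω : Fin n → Ω,
      (List.ofFn fun k => X (ω k) ⊗ₖ Y (ω k)).prod (i,i') (j,j') = F ω * G ω := by
    intro ω; rw [kron_listProd]; rfl
  have hu : ∀ ω : Fin n → Ω,
      (List.ofFn fun k => X (ω k) ⊗ₖ X (ω k)).prod (i,i) (j,j) = F ω * F ω := by
    intro ω; rw [kron_listProd]; rfl
  have hw : ∀ ω : Fin n → Ω,
      (List.ofFn fun k => Y (ω k) ⊗ₖ Y (ω k)).prod (i',i') (j',j') = G ω * G ω := by
    intro ω; rw [kron_listProd]; rfl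
  have IFF : Integrable (fun ω => F ω * F ω) πn :=
    (hIxx (i,i) (j,j)).congr (Filter.Eventually.of_forall fun ω => hu ω)
  have IFG : Integrable (fun ω => F ω * G ω) πn :=
    (hIxy (i,i') (j,j')).congr (Filter.Eventually.of_forall fun ω => hv ω)
  have IGG : Integrable (fun ω => G ω * G ω) πn :=
    (hIyy (i',i') (j',j')).congr (Filter.Eventually.of_forall fun ω => hw ω)
  have eFF : (∫ ω, (List.ofFn fun k => X (ω k) ⊗ₖ X (ω k)).prod (i,i) (j,j) ∂πn)
      = ∫ ω, F ω * F ω ∂πn := integral_congr_ae (Filter.Eventually.of_forall hu)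
  have eFG : (∫ ω, (List.ofFn fun k => X (ω k) ⊗ₖ Y (ω k)).prod (i,i') (j,j') ∂πn)
      = ∫ ω, F ω * G ω ∂πn := integral_congr_ae (Filter.Eventually.of_forall hv)
  have eGG : (∫ ω, (List.ofFn fun k => Y (ω k) ⊗ₖ Y (ω k)).prod (i',i') (j',j') ∂πn)
      = ∫ ω, G ω * G ω ∂πn := integral_congr_ae (Filter.Eventually.of_forall hw)
  rw [eFF, eFG, eGG]
  have hunn : 0 ≤ ∫ ω, F ω * F ω ∂πn :=
    integral_nonneg fun ω => mul_self_nonneg _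
  have hwnn : 0 ≤ ∫ ω, G ω * G ω ∂πn :=
    integral_nonneg fun ω => mul_self_nonneg _
  refine ⟨?_, hunn, hwnn⟩
  have key : ∀ t : ℝ, 0 ≤ (∫ ω, F ω * F ω ∂πn) * (t * t)
      + (2 * ∫ ω, F ω * G ω ∂πn) * t + ∫ ω, G ω * G ω ∂πn := by
    intro t
    have i1 : Integrable (fun ω => F ω * F ω * (t * t)) πn := IFF.mul_const _
    have i2 : Integrable (fun ω => 2 * (F ω * G ω) * t) πn :=
      (IFG.const_mul 2).mul_const _
    have i12 : Integrable (fun ω => F ω * F ω * (t * t) + 2 * (F ω * G ω) * t) πn :=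
      i1.add i2
    have heq : ∫ ω, (F ω * F ω * (t * t) + 2 * (F ω * G ω) * t + G ω * G ω) ∂πn
        = (∫ ω, F ω * F ω ∂πn) * (t * t) + (2 * ∫ ω, F ω * G ω ∂πn) * t
          + ∫ ω, G ω * G ω ∂πn := by
      rw [integral_add i12 IGG, integral_add i1 i2, integral_mul_const,
        integral_mul_const, integral_const_mul]
    rw [← heq]
    refine integral_nonneg fun ω => ?_
    have h1 := sq_nonneg (t * F ω + G ω)
    simp only [Pi.zero_apply]
    nlinarith [h1]
  have hd := discrim_le_zero key
  rw [discrim] at hd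
  nlinarith [hd]

lemma entry_norm_le {m : Type*} [Fintype m] [DecidableEq m] (C : Matrix m m ℂ) (a : m) (b : m) :
    ‖C a b‖ ≤ ‖C‖ := by
  have h1 : ‖C a b‖₊ ≤ ∑ j, ‖C a j‖₊ :=
    Finset.single_le_sum (f := fun j => ‖C a j‖₊) (fun _ _ => zero_le) (Finset.mem_univ b)
  have h2 : (∑ j, ‖C a j‖₊) ≤ ‖C‖₊ := by
    rw [Matrix.linfty_opNNNorm_def]
    exact Finset.le_sup (f := fun i => ∑ j, ‖C i j‖₊) (Finset.mem_univ a)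
  exact_mod_cast h1.trans h2

lemma norm_le_sum {m : Type*} [Fintype m] [DecidableEq m] (C : Matrix m m ℂ) :
    ‖C‖ ≤ ∑ a, ∑ b, ‖C a b‖ := by
  have h2 : ‖C‖₊ ≤ ∑ a, ∑ b, ‖C a b‖₊ := by
    rw [Matrix.linfty_opNNNorm_def]
    refine Finset.sup_le fun a _ => ?_
    exact Finset.single_le_sum (f := fun a => ∑ b, ‖C a b‖₊) (fun _ _ => zero_le)
      (Finset.mem_univ a)
  have := (NNReal.coe_le_coe).2 h2
  simpa [NNReal.coe_sum] using this

lemma map_pow_entry {m : Type*} [Fintype m] [DecidableEq m] (M : Matrix m m ℝ) (n : ℕ)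
    (a b : m) : ‖((M.map (algebraMap ℝ ℂ)) ^ n) a b‖ = |(M ^ n) a b| := by
  have h : (M.map (algebraMap ℝ ℂ)) ^ n = (M ^ n).map (algebraMap ℝ ℂ) := by
    rw [← RingHom.mapMatrix_apply, ← RingHom.mapMatrix_apply, map_pow]
  rw [h, Matrix.map_apply]
  simp [Complex.norm_real]

lemma specRad_le_of_entry_sq {q s : ℕ} [NeZero q] [NeZero s]
    (M : Matrix (Fin q × Fin s) (Fin q × Fin s) ℝ)
    (A : Matrix (Fin q × Fin q) (Fin q × Fin q) ℝ)
    (B : Matrix (Fin s × Fin s) (Fin s × Fin s) ℝ)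
    (h : ∀ (n : ℕ) (i j : Fin q) (i' j' : Fin s),
      ((M ^ n) (i,i') (j,j'))^2 ≤ (A ^ n) (i,i) (j,j) * (B ^ n) (i',i') (j',j')
      ∧ 0 ≤ (A ^ n) (i,i) (j,j) ∧ 0 ≤ (B ^ n) (i',i') (j',j')) :
    specRad M ≤ Real.sqrt (specRad A) * Real.sqrt (specRad B) := by
  set c := algebraMap ℝ ℂ with hc
  set aM := M.map c with haM
  set aA := A.map c with haA
  set aB := B.map c with haB
  set K : ℝ := ((Fintype.card (Fin q × Fin s)) : ℝ)^2 with hK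
  have hKpos : 0 < K := by
    have h1 : 0 < Fintype.card (Fin q × Fin s) := Fintype.card_pos
    positivity
  -- norm chain
  have hnorm : ∀ n : ℕ, ‖aM ^ n‖ ≤ K * (Real.sqrt ‖aA ^ n‖ * Real.sqrt ‖aB ^ n‖) := by
    intro n
    have hA : ∀ (i j : Fin q), (A ^ n) (i,i) (j,j) ≤ ‖aA ^ n‖ := fun i j =>
      calc (A ^ n) (i,i) (j,j) ≤ |(A ^ n) (i,i) (j,j)| := le_abs_self _
        _ = ‖(aA ^ n) (i,i) (j,j)‖ := (map_pow_entry A n _ _).symm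
        _ ≤ ‖aA ^ n‖ := entry_norm_le _ _ _
    have hB : ∀ (i j : Fin s), (B ^ n) (i,i) (j,j) ≤ ‖aB ^ n‖ := fun i j =>
      calc (B ^ n) (i,i) (j,j) ≤ |(B ^ n) (i,i) (j,j)| := le_abs_self _
        _ = ‖(aB ^ n) (i,i) (j,j)‖ := (map_pow_entry B n _ _).symm
        _ ≤ ‖aB ^ n‖ := entry_norm_le _ _ _
    have hentry : ∀ a b : Fin q × Fin s,
        ‖(aM ^ n) a b‖ ≤ Real.sqrt ‖aA ^ n‖ * Real.sqrt ‖aB ^ n‖ := by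
      rintro ⟨i, i'⟩ ⟨j, j'⟩
      obtain ⟨h1, h2, h3⟩ := h n i j i' j'
      rw [map_pow_entry]
      calc |(M ^ n) (i,i') (j,j')|
          = Real.sqrt (((M ^ n) (i,i') (j,j'))^2) := (Real.sqrt_sq_eq_abs _).symm
        _ ≤ Real.sqrt ((A ^ n) (i,i) (j,j) * (B ^ n) (i',i') (j',j')) :=
            Real.sqrt_le_sqrt h1
        _ = Real.sqrt ((A ^ n) (i,i) (j,j)) * Real.sqrt ((B ^ n) (i',i') (j',j')) :=
            Real.sqrt_mul h2 _
        _ ≤ Real.sqrt ‖aA ^ n‖ * Real.sqrt ‖aB ^ n‖ := by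
            exact mul_le_mul (Real.sqrt_le_sqrt (hA i j)) (Real.sqrt_le_sqrt (hB i' j'))
              (Real.sqrt_nonneg _) (Real.sqrt_nonneg _)
    calc ‖aM ^ n‖ ≤ ∑ a, ∑ b, ‖(aM ^ n) a b‖ := norm_le_sum _
      _ ≤ ∑ _a : Fin q × Fin s, ∑ _b : Fin q × Fin s,
            (Real.sqrt ‖aA ^ n‖ * Real.sqrt ‖aB ^ n‖) :=
          Finset.sum_le_sum fun a _ => Finset.sum_le_sum fun b _ => hentry a b
      _ = K * (Real.sqrt ‖aA ^ n‖ * Real.sqrt ‖aB ^ n‖) := by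
          simp [Finset.sum_const, Finset.card_univ, hK]
          ring
  -- ENNReal pointwise bound
  have hstep : ∀ n : ℕ, (‖aM ^ n‖₊ : ℝ≥0∞) ^ (1/(n:ℝ))
      ≤ (ENNReal.ofReal K) ^ (1/(n:ℝ)) *
        (((‖aA ^ n‖₊ : ℝ≥0∞) ^ (1/(n:ℝ))) ^ (1/2:ℝ) *
          ((‖aB ^ n‖₊ : ℝ≥0∞) ^ (1/(n:ℝ))) ^ (1/2:ℝ)) := by
    intro n
    have base : (‖aM ^ n‖₊ : ℝ≥0∞)
        ≤ ENNReal.ofReal K * ((‖aA ^ n‖₊ : ℝ≥0∞) ^ (1/2:ℝ) * (‖aB ^ n‖₊ : ℝ≥0∞) ^ (1/2:ℝ)) := by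
      rw [← ENNReal.ofReal_coe_nnreal, coe_nnnorm, ← ENNReal.ofReal_coe_nnreal, coe_nnnorm,
        ← ENNReal.ofReal_coe_nnreal, coe_nnnorm]
      calc ENNReal.ofReal ‖aM ^ n‖
          ≤ ENNReal.ofReal (K * (Real.sqrt ‖aA ^ n‖ * Real.sqrt ‖aB ^ n‖)) :=
            ENNReal.ofReal_le_ofReal (hnorm n)
        _ = ENNReal.ofReal K *
            (ENNReal.ofReal (Real.sqrt ‖aA ^ n‖) * ENNReal.ofReal (Real.sqrt ‖aB ^ n‖)) := by
            rw [ENNReal.ofReal_mul hKpos.le, ENNReal.ofReal_mul (Real.sqrt_nonneg _)]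
        _ = _ := by
            rw [Real.sqrt_eq_rpow, Real.sqrt_eq_rpow,
              ENNReal.ofReal_rpow_of_nonneg (norm_nonneg _) (by norm_num),
              ENNReal.ofReal_rpow_of_nonneg (norm_nonneg _) (by norm_num)]
    calc (‖aM ^ n‖₊ : ℝ≥0∞) ^ (1/(n:ℝ))
        ≤ (ENNReal.ofReal K *
            ((‖aA ^ n‖₊ : ℝ≥0∞) ^ (1/2:ℝ) * (‖aB ^ n‖₊ : ℝ≥0∞) ^ (1/2:ℝ))) ^ (1/(n:ℝ)) :=
          ENNReal.rpow_le_rpow base (by positivity)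
      _ = _ := by
          rw [ENNReal.mul_rpow_of_nonneg _ _ (by positivity),
            ENNReal.mul_rpow_of_nonneg _ _ (by positivity),
            ← ENNReal.rpow_mul, ← ENNReal.rpow_mul,
            mul_comm (1/2:ℝ) (1/(n:ℝ)), ENNReal.rpow_mul, ENNReal.rpow_mul]
  -- limits
  have TM := spectrum.pow_nnnorm_pow_one_div_tendsto_nhds_spectralRadius aM
  have TA := spectrum.pow_nnnorm_pow_one_div_tendsto_nhds_spectralRadius aA
  have TB := spectrum.pow_nnnorm_pow_one_div_tendsto_nhds_spectralRadius aB
  have hAne : spectralRadius ℂ aA ≠ ⊤ :=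
    ((spectrum.spectralRadius_le_nnnorm aA).trans_lt ENNReal.coe_lt_top).ne
  have hBne : spectralRadius ℂ aB ≠ ⊤ :=
    ((spectrum.spectralRadius_le_nnnorm aB).trans_lt ENNReal.coe_lt_top).ne
  have hA2ne : (spectralRadius ℂ aA) ^ (1/2:ℝ) ≠ ⊤ :=
    ENNReal.rpow_ne_top_of_nonneg (by norm_num) hAne
  have hB2ne : (spectralRadius ℂ aB) ^ (1/2:ℝ) ≠ ⊤ :=
    ENNReal.rpow_ne_top_of_nonneg (by norm_num) hBne
  have hKlim : Tendsto (fun n : ℕ => (ENNReal.ofReal K) ^ (1/(n:ℝ))) atTop (𝓝 1) := by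
    have h1 : Tendsto (fun n : ℕ => (1:ℝ)/n) atTop (𝓝 0) := tendsto_one_div_atTop_nhds_zero_nat
    have h2 : Tendsto (fun n : ℕ => K ^ ((1:ℝ)/(n:ℝ))) atTop (𝓝 1) := by
      have h3 := (Real.continuousAt_const_rpow (ne_of_gt hKpos)).tendsto.comp h1
      simpa [Function.comp_def, Real.rpow_zero] using h3
    have h4 := (ENNReal.continuous_ofReal.tendsto 1).comp h2
    rw [ENNReal.ofReal_one] at h4
    exact h4.congr fun n => by
      simp only [Function.comp_apply]
      exact (ENNReal.ofReal_rpow_of_pos hKpos).symm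
  have TA2 := TA.ennrpow_const (1/2 : ℝ)
  have TB2 := TB.ennrpow_const (1/2 : ℝ)
  have Tinner := ENNReal.Tendsto.mul TA2 (Or.inr hB2ne) TB2 (Or.inr hA2ne)
  have Trhs := ENNReal.Tendsto.mul hKlim (Or.inl one_ne_zero) Tinner
    (Or.inr ENNReal.one_ne_top)
  have main : spectralRadius ℂ aM
      ≤ (spectralRadius ℂ aA) ^ (1/2:ℝ) * (spectralRadius ℂ aB) ^ (1/2:ℝ) := by
    have := le_of_tendsto_of_tendsto' TM Trhs hstep
    simpa using this
  have hne : (spectralRadius ℂ aA) ^ (1/2:ℝ) * (spectralRadius ℂ aB) ^ (1/2:ℝ) ≠ ⊤ :=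
    ENNReal.mul_ne_top hA2ne hB2ne
  have hfinal := ENNReal.toReal_mono hne main
  rw [ENNReal.toReal_mul, ← ENNReal.toReal_rpow, ← ENNReal.toReal_rpow] at hfinal
  rw [specRad, specRad, specRad, Real.sqrt_eq_rpow, Real.sqrt_eq_rpow]
  exact hfinal

end Aux

/-- Tensor Cauchy–Schwarz for spectral radii: for square random matrices `X`, `Y`
(of possibly different sizes) with entrywise integrable tensor products,
`ρ(𝔼(X⊗Y)) ≤ √ρ(𝔼(X⊗X)) · √ρ(𝔼(Y⊗Y))`. -/
theorem stmt15 (q s : ℕ) {Ω : Type*} [MeasurableSpace Ω]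
    (μ : Measure Ω) [IsProbabilityMeasure μ]
    (X : Ω → Matrix (Fin q) (Fin q) ℝ) (Y : Ω → Matrix (Fin s) (Fin s) ℝ)
    (hXY : ∀ i j i' j', Integrable (fun ω => X ω i j * Y ω i' j') μ)
    (hXX : ∀ i j i' j', Integrable (fun ω => X ω i j * X ω i' j') μ)
    (hYY : ∀ i j i' j', Integrable (fun ω => Y ω i j * Y ω i' j') μ) :
    specRad (Matrix.of fun a b => ∫ ω, (X ω ⊗ₖ Y ω) a b ∂μ)
      ≤ Real.sqrt (specRad (Matrix.of fun a b => ∫ ω, (X ω ⊗ₖ X ω) a b ∂μ))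
        * Real.sqrt (specRad (Matrix.of fun a b => ∫ ω, (Y ω ⊗ₖ Y ω) a b ∂μ)) := by
  classical
  by_cases hqs : q = 0 ∨ s = 0
  · haveI : IsEmpty (Fin q × Fin s) := by
      rcases hqs with h | h
      · subst h; exact ⟨fun x => (Fin.elim0 x.1)⟩
      · subst h; exact ⟨fun x => (Fin.elim0 x.2)⟩
    rw [specRad_of_isEmpty]
    exact mul_nonneg (Real.sqrt_nonneg _) (Real.sqrt_nonneg _)
  push_neg at hqs
  obtain ⟨hq, hs⟩ := hqs
  haveI : NeZero q := ⟨hq⟩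
  haveI : NeZero s := ⟨hs⟩
  exact specRad_le_of_entry_sq _ _ _ fun n i j i' j' => entry_ineq hXY hXX hYY n i j i' j'
end
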